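/- Let f, g : ℝ^{d_x} × ℝ^{d_y} → ℝ be differentiable, with f being L_f-gradient Lipschitz and g(x, ·) being μ-strongly convex for every x. Then for every λ ≥ 2L_f/μ and every x ∈ ℝ^{d_x}, the map y ↦ L_λ(x, y) := f(x, y) + λ(g(x, y) − min_{z ∈ ℝ^{d_y}} g(x, z)) is (λμ/2)-strongly convex. -/

import Mathlib

open Set

noncomputable section

/-- `ℝ^n` with the Euclidean norm. -/
abbrev Euc (n : ℕ) := EuclideanSpace ℝ (Fin n)

/-- The point `(x, y)` of the Euclidean (ℓ²) product `ℝ^{d_x} × ℝ^{d_y}`. -/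
def pt {dx dy : ℕ} (x : Euc dx) (y : Euc dy) : WithLp 2 (Euc dx × Euc dy) :=
  (WithLp.equiv 2 (Euc dx × Euc dy)).symm (x, y)

open InnerProductSpace in
/-- A differentiable function whose directional derivatives are monotone along segments is
convex. -/
lemma convexOn_univ_of_fderiv_monotone {E : Type*} [NormedAddCommGroup E] [NormedSpace ℝ E]
    (φ : E → ℝ) (hdiff : Differentiable ℝ φ)
    (hmono : ∀ p q : E, 0 ≤ fderiv ℝ φ p (p - q) - fderiv ℝ φ q (p - q)) :
    ConvexOn ℝ Set.univ φ := by
  refine ⟨convex_univ, fun p _ q _ a b ha hb hab => ?_⟩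
  set v := p - q with hv
  have hγ : ∀ t : ℝ, HasDerivAt (fun t : ℝ => q + t • v) v t := fun t => by
    simpa using ((hasDerivAt_id t).smul_const v).const_add q
  set Q : ℝ → ℝ := fun t => φ (q + t • v) with hQ
  have hQd : ∀ t, HasDerivAt Q (fderiv ℝ φ (q + t • v) v) t := fun t =>
    (hdiff _).hasFDerivAt.comp_hasDerivAt t (hγ t)
  have hQdiff : Differentiable ℝ Q := fun t => (hQd t).differentiableAt
  have hmonoQ : Monotone (deriv Q) := by
    intro s t hst
    rw [(hQd s).deriv, (hQd t).deriv]
    rcases eq_or_lt_of_le hst with rfl | hst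
    · exact le_refl _
    have key := hmono (q + t • v) (q + s • v)
    have heq : (q + t • v) - (q + s • v) = (t - s) • v := by
      rw [sub_smul]; abel
    rw [heq] at key
    simp only [map_smul, smul_eq_mul] at key
    nlinarith [key]
  have hconv : ConvexOn ℝ Set.univ Q := Monotone.convexOn_univ_of_deriv hQdiff hmonoQ
  have h01 := hconv.2 (Set.mem_univ (1 : ℝ)) (Set.mem_univ (0 : ℝ)) ha hb hab
  have e1 : Q 1 = φ p := by simp [hQ, hv]
  have e0 : Q 0 = φ q := by simp [hQ]
  have hb' : b = 1 - a := by linarith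
  have hkey2 : q + a • v = a • p + b • q := by
    rw [hv, hb', smul_sub, sub_smul, one_smul]; abel
  have ea : Q (a • (1 : ℝ) + b • (0 : ℝ)) = φ (a • p + b • q) := by
    simp only [hQ, smul_eq_mul, mul_one, mul_zero, add_zero, hkey2]
  rw [ea, e1, e0] at h01
  simpa using h01

open InnerProductSpace in
/-- A differentiable function whose directional derivatives are `L`-almost monotone, plus
`L/2 ‖·‖²`, is convex. -/
lemma convexOn_add_quadratic_of_fderiv {E : Type*} [NormedAddCommGroup E]
    [InnerProductSpace ℝ E] (φ : E → ℝ) (L : ℝ) (hdiff : Differentiable ℝ φ)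
    (hmono : ∀ p q : E,
      -(L * ‖p - q‖ ^ 2) ≤ fderiv ℝ φ p (p - q) - fderiv ℝ φ q (p - q)) :
    ConvexOn ℝ Set.univ (fun y => φ y + L / 2 * ‖y‖ ^ 2) := by
  have hnsq : ∀ y : E, HasFDerivAt (fun y : E => ‖y‖ ^ 2)
      ((2 : ℝ) • (innerSL ℝ y : E →L[ℝ] ℝ)) y := by
    intro y
    have h1 : HasFDerivAt (fun y : E => @inner ℝ E _ y y)
        ((innerSL ℝ y).comp (ContinuousLinearMap.id ℝ E)
          + (innerSL ℝ y).comp (ContinuousLinearMap.id ℝ E)) y := by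
      have := (hasFDerivAt_id y).inner ℝ (hasFDerivAt_id y)
      refine this.congr_fderiv ?_
      ext w
      simp [fderivInnerCLM_apply, real_inner_comm]
    have heq : (fun y : E => ‖y‖ ^ 2) = fun y : E => @inner ℝ E _ y y := by
      funext z; rw [real_inner_self_eq_norm_sq]
    rw [heq]
    convert h1 using 1
    ext w
    simp [two_smul]
  have hΨdiff : Differentiable ℝ (fun y => φ y + L / 2 * ‖y‖ ^ 2) :=
    fun y => (hdiff y).add (((hnsq y).differentiableAt).const_mul _)
  apply convexOn_univ_of_fderiv_monotone _ hΨdiff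
  intro p q
  have hfd : ∀ y : E, fderiv ℝ (fun y => φ y + L / 2 * ‖y‖ ^ 2) y
      = fderiv ℝ φ y + (L / 2) • ((2 : ℝ) • (innerSL ℝ y : E →L[ℝ] ℝ)) := by
    intro y
    have : HasFDerivAt (fun y => φ y + L / 2 * ‖y‖ ^ 2)
        (fderiv ℝ φ y + (L / 2) • ((2 : ℝ) • (innerSL ℝ y : E →L[ℝ] ℝ))) y :=
      (hdiff y).hasFDerivAt.add ((hnsq y).const_mul (L / 2))
    exact this.fderiv
  rw [hfd p, hfd q]
  have hkey := hmono p q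
  have hinner : @inner ℝ E _ p (p - q) - @inner ℝ E _ q (p - q) = ‖p - q‖ ^ 2 := by
    rw [← inner_sub_left, real_inner_self_eq_norm_sq]
  simp only [ContinuousLinearMap.add_apply, ContinuousLinearMap.smul_apply, innerSL_apply_apply,
    smul_eq_mul]
  have h7 : L / 2 * (2 * @inner ℝ E _ p (p - q)) - L / 2 * (2 * @inner ℝ E _ q (p - q))
      = L * ‖p - q‖ ^ 2 := by linear_combination L * hinner
  linarith [hkey, h7]

/-- The linear part `v ↦ (0, v)` of `pt x`. -/
lemma pt_sub {dx dy : ℕ} (x : Euc dx) (p q : Euc dy) :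
    pt x p - pt x q = pt 0 (p - q) := by
  have := (WithLp.linearEquiv 2 ℝ (Euc dx × Euc dy)).symm.map_sub (x, p) (x, q)
  simpa [pt, Prod.mk_sub_mk] using this.symm

lemma pt_norm {dy dx : ℕ} (v : Euc dy) : ‖pt (0 : Euc dx) v‖ = ‖v‖ := by
  rw [WithLp.prod_norm_eq_of_L2]
  have h1 : (pt (0 : Euc dx) v).fst = 0 := rfl
  have h2 : (pt (0 : Euc dx) v).snd = v := rfl
  rw [h1, h2]
  simp [Real.sqrt_sq_eq_abs]

open InnerProductSpace in
lemma slice_smooth_convex {dx dy : ℕ} (f : WithLp 2 (Euc dx × Euc dy) → ℝ) (Lf : ℝ)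
    (hfdiff : Differentiable ℝ f)
    (hf_smooth : ∀ q r, ‖gradient f q - gradient f r‖ ≤ Lf * ‖q - r‖) (x : Euc dx) :
    ConvexOn ℝ univ (fun y : Euc dy => f (pt x y) + Lf / 2 * ‖y‖ ^ 2) := by
  -- the affine map `T y = pt x y`
  set J : Euc dy →L[ℝ] WithLp 2 (Euc dx × Euc dy) :=
    ((WithLp.prodContinuousLinearEquiv 2 ℝ (Euc dx)
        (Euc dy)).symm.toContinuousLinearMap).comp
      (ContinuousLinearMap.inr ℝ (Euc dx) (Euc dy)) with hJ
  have hT : ∀ y : Euc dy, HasFDerivAt (fun y : Euc dy => pt x y) J y := by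
    intro y
    have h1 : HasFDerivAt (fun y : Euc dy => ((x, y) : Euc dx × Euc dy))
        (ContinuousLinearMap.inr ℝ (Euc dx) (Euc dy)) y := by
      exact HasFDerivAt.prodMk (hasFDerivAt_const x y) (hasFDerivAt_id y)
    exact ((WithLp.prodContinuousLinearEquiv 2 ℝ
      (Euc dx) (Euc dy)).symm.hasFDerivAt).comp y h1
  have hJapp : ∀ v : Euc dy, J v = pt 0 v := fun v => by
    simp [hJ, pt]
  have hcomp : ∀ y : Euc dy, HasFDerivAt (fun y : Euc dy => f (pt x y))
      ((fderiv ℝ f (pt x y)).comp J) y :=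
    fun y => ((hfdiff (pt x y)).hasFDerivAt).comp y (hT y)
  have hφdiff : Differentiable ℝ (fun y : Euc dy => f (pt x y)) :=
    fun y => (hcomp y).differentiableAt
  apply convexOn_add_quadratic_of_fderiv _ _ hφdiff
  intro p q
  have hfderiv : ∀ y : Euc dy, fderiv ℝ (fun y : Euc dy => f (pt x y)) y
      = (fderiv ℝ f (pt x y)).comp J := fun y => (hcomp y).fderiv
  rw [hfderiv p, hfderiv q]
  -- express fderiv of f via gradient
  have hgrad : ∀ P : WithLp 2 (Euc dx × Euc dy), ∀ w,
      fderiv ℝ f P w = @inner ℝ _ _ (gradient f P) w := by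
    intro P w
    have h := (hfdiff P).hasGradientAt
    rw [hasGradientAt_iff_hasFDerivAt] at h
    simp [gradient]
  simp only [ContinuousLinearMap.comp_apply, hJapp, hgrad]
  rw [← inner_sub_left]
  have h2 := abs_real_inner_le_norm
    (gradient f (pt x p) - gradient f (pt x q)) (pt (0 : Euc dx) (p - q))
  have h3 := hf_smooth (pt x p) (pt x q)
  rw [pt_sub, pt_norm] at h3
  rw [pt_norm] at h2
  have h6 := neg_le_of_abs_le h2
  have hn : (0:ℝ) ≤ ‖p - q‖ := norm_nonneg _
  have h7 : ‖gradient f (pt x p) - gradient f (pt x q)‖ * ‖p - q‖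
      ≤ Lf * ‖p - q‖ * ‖p - q‖ := mul_le_mul_of_nonneg_right h3 hn
  have h8 : Lf * ‖p - q‖ * ‖p - q‖ = Lf * ‖p - q‖ ^ 2 := by ring
  linarith

/-- Lemma of Kwon et al.: if `f` is `L_f`-gradient Lipschitz and `g (x, ·)`
is `μ`-strongly convex for every `x`, then for every `λ ≥ 2 L_f / μ` and every `x`, the map
`y ↦ L_λ(x, y) := f (x, y) + λ (g (x, y) - min_z g (x, z))` is `(λ μ / 2)`-strongly convex,
i.e. `y ↦ L_λ(x, y) - (λ μ / 2) / 2 * ‖y‖²` is convex. -/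
theorem penalty_strongly_convex
    {dx dy : ℕ} (f g : WithLp 2 (Euc dx × Euc dy) → ℝ) (Lf μ : ℝ)
    (hLf : 0 ≤ Lf) (hμ : 0 < μ)
    (hfdiff : Differentiable ℝ f) (hgdiff : Differentiable ℝ g)
    (hf_smooth : ∀ q r, ‖gradient f q - gradient f r‖ ≤ Lf * ‖q - r‖)
    (hg_sc : ∀ x : Euc dx,
      ConvexOn ℝ univ (fun y : Euc dy => g (pt x y) - μ / 2 * ‖y‖ ^ 2))
    (lam : ℝ) (hlam : 2 * Lf / μ ≤ lam) (x : Euc dx) :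
    ConvexOn ℝ univ (fun y : Euc dy =>
      (f (pt x y) + lam * (g (pt x y) - ⨅ z : Euc dy, g (pt x z)))
        - (lam * μ / 2) / 2 * ‖y‖ ^ 2) := by
  have hlam0 : 0 ≤ lam := le_trans (by positivity) hlam
  have hlamμ : 2 * Lf ≤ lam * μ := by
    rw [div_le_iff₀ hμ] at hlam; linarith
  set c₀ : ℝ := ⨅ z : Euc dy, g (pt x z) with hc₀
  -- piece A : f + Lf/2 ‖·‖²
  have hA : ConvexOn ℝ univ (fun y : Euc dy => f (pt x y) + Lf / 2 * ‖y‖ ^ 2) :=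
    slice_smooth_convex f Lf hfdiff hf_smooth x
  -- piece B : lam • (g - μ/2 ‖·‖²)
  have hB : ConvexOn ℝ univ
      (fun y : Euc dy => lam • (g (pt x y) - μ / 2 * ‖y‖ ^ 2)) :=
    (hg_sc x).smul hlam0
  -- piece C : (lam μ/4 - Lf/2) ‖·‖² - lam c₀
  have hc : 0 ≤ lam * μ / 4 - Lf / 2 := by linarith
  have hC0 : ConvexOn ℝ univ
      (fun y : Euc dy => (0:ℝ) + (2 * (lam * μ / 4 - Lf / 2)) / 2 * ‖y‖ ^ 2) := by
    apply convexOn_add_quadratic_of_fderiv (fun _ => (0:ℝ))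
      (2 * (lam * μ / 4 - Lf / 2)) (differentiable_const 0)
    intro p q
    have : fderiv ℝ (fun _ : Euc dy => (0:ℝ)) = fun _ => 0 := by
      funext y; exact fderiv_const_apply 0
    rw [this]
    simp only [ContinuousLinearMap.zero_apply, sub_zero]
    nlinarith [sq_nonneg ‖p - q‖, hc]
  have hC : ConvexOn ℝ univ
      (fun y : Euc dy =>
        ((0:ℝ) + (2 * (lam * μ / 4 - Lf / 2)) / 2 * ‖y‖ ^ 2) + (-(lam * c₀))) :=
    hC0.add_const _
  have hsum := (hA.add hB).add hC
  have hEq : (fun y : Euc dy =>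
      (f (pt x y) + lam * (g (pt x y) - c₀)) - (lam * μ / 2) / 2 * ‖y‖ ^ 2)
      = fun y : Euc dy =>
      ((f (pt x y) + Lf / 2 * ‖y‖ ^ 2) + lam • (g (pt x y) - μ / 2 * ‖y‖ ^ 2))
        + (((0:ℝ) + (2 * (lam * μ / 4 - Lf / 2)) / 2 * ‖y‖ ^ 2) + (-(lam * c₀))) := by
    funext y
    simp only [smul_eq_mul]
    ring
  rw [hEq]
  exact hsum
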